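/- Let k be a field of characteristic 0, 𝔐 a monomial group, and (ε_i)_{i∈I} a summable family in k[[𝔐]]^{≺1}. Then the family (∏_{i∈E} ε_i)_E, indexed by the finite subsets E of I, is summable, and exp(∑_{i} log(1+ε_i)) = ∑_E ∏_{i∈E} ε_i. -/

import Mathlib

noncomputable section

open Classical

namespace LogHyp

universe u v w

/-- A subset of a totally ordered set is *well-based* if it contains no infinite
strictly increasing sequence. -/
def WellBased {M : Type u} [Preorder M] (S : Set M) : Prop :=
  ¬ ∃ f : ℕ → M, StrictMono f ∧ ∀ n, f n ∈ S

theorem wellBased_isPWO {M : Type u} [LinearOrder M] {S : Set Mᵒᵈ}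
    (h : WellBased (OrderDual.toDual ⁻¹' S)) : S.IsPWO := by
  rw [Set.isPWO_iff_isWF, Set.isWF_iff_no_descending_seq]
  intro f hf hmem
  exact h ⟨fun n => OrderDual.ofDual (f n), fun a b hab => hf hab, hmem⟩

/-- A family in a field of well-based series (series with monomials in `Mᵒᵈ`,
so that supports are well-based as subsets of `M`) is summable if the union of
the supports is well-based and each monomial lies in the support of only
finitely many members. -/
def IsSummable {M : Type u} [LinearOrder M] {R : Type v} [Zero R] {ι : Type w}
    (f : ι → HahnSeries Mᵒᵈ R) : Prop :=
  WellBased (OrderDual.toDual ⁻¹' (⋃ i, (f i).support)) ∧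
    ∀ g : Mᵒᵈ, {i | (f i).coeff g ≠ 0}.Finite

/-- The sum of a summable family (junk value `0` if the family is not summable). -/
noncomputable def famSum {M : Type u} [LinearOrder M] {R : Type v} [AddCommMonoid R] {ι : Type w}
    (f : ι → HahnSeries Mᵒᵈ R) : HahnSeries Mᵒᵈ R :=
  if h : IsSummable f then
    (⟨f, wellBased_isPWO h.1, h.2⟩ : HahnSeries.SummableFamily Mᵒᵈ R ι).hsum
  else 0

/-- Strongly `k`-linear maps between fields of well-based series:
`k`-linear maps sending summable families to summable families, preserving sums. -/
def IsStronglyLinear {k : Type v} [Semiring k] {M : Type u} {N : Type w}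
    [LinearOrder M] [LinearOrder N]
    (Φ : HahnSeries Mᵒᵈ k → HahnSeries Nᵒᵈ k) : Prop :=
  (∀ (c : k) (f : HahnSeries Mᵒᵈ k), Φ (c • f) = c • Φ f) ∧
  (∀ f g, Φ (f + g) = Φ f + Φ g) ∧
  ∀ {ι : Type u} (f : ι → HahnSeries Mᵒᵈ k), IsSummable f →
    IsSummable (fun i => Φ (f i)) ∧ Φ (famSum f) = famSum fun i => Φ (f i)

/-- `f ≺ g`: the dominant monomial of `f` is smaller than that of `g`
(with `𝔡 0` below all monomials). -/
def prec {M : Type u} [LinearOrder M] {R : Type v} [Zero R]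
    (f g : HahnSeries Mᵒᵈ R) : Prop :=
  g ≠ 0 ∧ ∀ m ∈ f.support, ∃ n ∈ g.support,
    (OrderDual.ofDual m : M) < OrderDual.ofDual n

/-- `f ⪯ g`: the dominant monomial of `f` is at most that of `g`. -/
def preceq {M : Type u} [LinearOrder M] {R : Type v} [Zero R]
    (f g : HahnSeries Mᵒᵈ R) : Prop :=
  ∀ m ∈ f.support, ∃ n ∈ g.support, (OrderDual.ofDual m : M) ≤ OrderDual.ofDual n

/-- The coefficient of the dominant (i.e. maximal) monomial of `f` (0 for `f = 0`). -/
noncomputable def leadCoeff {M : Type u} [LinearOrder M] {k : Type v} [Zero k]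
    (f : HahnSeries Mᵒᵈ k) : k :=
  if hf : f = 0 then 0
  else f.coeff (f.isWF_support.min (HahnSeries.support_nonempty_iff.mpr hf))

/-- `f > 0` for real well-based series: the leading coefficient is positive. -/
def SPos {M : Type u} [LinearOrder M] (f : HahnSeries Mᵒᵈ ℝ) : Prop := 0 < leadCoeff f

/-- The ordering of real well-based series: `f < g` iff `g - f` has positive
leading coefficient. -/
def SLt {M : Type u} [LinearOrder M] (f g : HahnSeries Mᵒᵈ ℝ) : Prop := SPos (g - f)

/-- `f > ℝ` : `f` exceeds every real constant. -/
def gtR {M : Type u} [AddCommGroup M] [LinearOrder M] [IsOrderedAddMonoid M] (f : HahnSeries Mᵒᵈ ℝ) : Prop :=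
  ∀ r : ℝ, SLt (HahnSeries.C r) f

/-- `log(1+ε) = ∑_{n≥1} (-1)^{n-1} ε^n / n`, for `ε ≺ 1`. -/
noncomputable def log1p {M : Type u} [AddCommGroup M] [LinearOrder M] [IsOrderedAddMonoid M] {k : Type v} [Field k]
    (ε : HahnSeries Mᵒᵈ k) : HahnSeries Mᵒᵈ k :=
  famSum fun n : ℕ => ((-1 : k) ^ n / ((n : k) + 1)) • ε ^ (n + 1)

/-- `exp(ε) = ∑_{n≥0} ε^n / n!`, for `ε ≺ 1`. -/
noncomputable def expS {M : Type u} [AddCommGroup M] [LinearOrder M] [IsOrderedAddMonoid M] {k : Type v} [Field k]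
    (f : HahnSeries Mᵒᵈ k) : HahnSeries Mᵒᵈ k :=
  famSum fun n : ℕ => ((n.factorial : k))⁻¹ • f ^ n

/-- The operator support of a linear operator: the smallest set `𝔖` of monomials with
`supp S(m) ⊆ 𝔖·m` for all monomials `m`. -/
def opSupport {M : Type u} [AddCommGroup M] [LinearOrder M] [IsOrderedAddMonoid M] {k : Type v} [Zero k] [One k]
    (S : HahnSeries Mᵒᵈ k → HahnSeries Mᵒᵈ k) : Set Mᵒᵈ :=
  ⋃ m : Mᵒᵈ, (fun g => g - m) '' (S (HahnSeries.single m 1)).support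



/-- The ordinals below `α`. -/
abbrev Idx (α : Ordinal.{0}) : Type 1 := {β : Ordinal.{0} // β < α}

/-- The monomial group `𝔏_{<α}`, written additively: a logarithmic hypermonomial
`ℓ^r = ∏_{β<α} ℓ_β^{r_β}` is identified with its exponent sequence `r`, and the
group is ordered lexicographically. -/
abbrev Mon (α : Ordinal.{0}) : Type 1 := Lex (Idx α → ℝ)

/-- The field `𝕃_{<α} = ℝ[[𝔏_{<α}]]` of logarithmic hyperseries: well-based series
with real coefficients and monomials in `𝔏_{<α}` (we use the order dual so that
supports are well-based, i.e. reverse well-ordered, subsets of `𝔏_{<α}`). -/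
abbrev LSeries (α : Ordinal.{0}) : Type 1 := HahnSeries (Mon α)ᵒᵈ ℝ

/-- The monomial `ℓ^r` as an element of the (dualised) monomial group. -/
def monExp (α : Ordinal.{0}) (r : Idx α → ℝ) : (Mon α)ᵒᵈ := OrderDual.toDual (toLex r)

/-- The monomial `ℓ^r` as an element of `𝕃_{<α}`. -/
noncomputable def monS (α : Ordinal.{0}) (r : Idx α → ℝ) : LSeries α :=
  HahnSeries.single (monExp α r) 1

/-- The exponent sequence of the hyperlogarithm `ℓ_β`. -/
def ellExp (α β : Ordinal.{0}) : Idx α → ℝ := fun ρ => if ρ.1 = β then 1 else 0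

/-- The hyperlogarithm `ℓ_β` as an element of `𝕃_{<α}` (for `β < α`). -/
noncomputable def ell (α β : Ordinal.{0}) : LSeries α := monS α (ellExp α β)

/-- The exponent sequence of `ℓ_β' = ∏_{ρ<β} ℓ_ρ⁻¹`. -/
def derExp (α β : Ordinal.{0}) : Idx α → ℝ := fun ρ => if ρ.1 < β then -1 else 0

/-- The exponent sequence of `ℓ_β† = ∏_{ρ≤β} ℓ_ρ⁻¹`. -/
def dagExp (α β : Ordinal.{0}) : Idx α → ℝ := fun ρ => if ρ.1 ≤ β then -1 else 0

/-- `D` is *the* derivation of `𝕃_{<α}`: a strongly `ℝ`-linear derivation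
with `D ℓ_β = ∏_{ρ<β} ℓ_ρ⁻¹` for all `β < α`. -/
def IsDerL (α : Ordinal.{0}) (D : LSeries α → LSeries α) : Prop :=
  IsStronglyLinear D ∧ (∀ f g, D (f * g) = f * D g + g * D f) ∧
    ∀ β : Ordinal.{0}, β < α → D (ell α β) = monS α (derExp α β)

/-- The exponent sequence of the dominant monomial of `f` (0 if `f = 0`). -/
noncomputable def domExp (α : Ordinal.{0}) (f : LSeries α) : Idx α → ℝ :=
  if hf : f = 0 then 0
  else ofLex (OrderDual.ofDual
    (f.isWF_support.min (HahnSeries.support_nonempty_iff.mpr hf)))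

/-- The logarithm on `𝕃_{<α}^{>0}` (`α` a limit ordinal):
`log (c·ℓ^r·(1+ε)) = ∑_β r_β ℓ_{β+1} + log c + ∑_{n≥1} (-1)^{n-1} ε^n/n`. -/
noncomputable def logFn (α : Ordinal.{0}) (f : LSeries α) : LSeries α :=
  (famSum fun β : Idx α => domExp α f β • ell α (β.1 + 1))
    + HahnSeries.C (Real.log (leadCoeff f))
    + log1p (f * (HahnSeries.single (monExp α (domExp α f)) (leadCoeff f))⁻¹ - 1)

/-- The logarithmicity `λ_f`: the least `β` with `r_β ≠ 0`, where `𝔡(f) = ℓ^r`. -/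
noncomputable def lambdaOf (α : Ordinal.{0}) (f : LSeries α) : Ordinal.{0} :=
  sInf {β : Ordinal.{0} | ∃ h : β < α, domExp α f ⟨β, h⟩ ≠ 0}

/-- The coefficient of `ω^δ` in the Cantor normal form of `μ`. -/
noncomputable def cnfCoeff (μ δ : Ordinal.{0}) : ℕ :=
  Cardinal.toNat (Ordinal.card ((μ / Ordinal.omega0 ^ δ) % Ordinal.omega0))

/-- `λ_{g;ν}`: writing `λ_g = ω^{β₁}n₁ + ⋯ + ω^{β_k}n_k` in Cantor normal form,
this is `n_i` if `ν = ω^{β_i+1}`, and `0` for every other ordinal `ν`. -/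
noncomputable def lambdaCoeff (α : Ordinal.{0}) (g : LSeries α) (ν : Ordinal.{0}) : ℕ :=
  if h : ∃ δ : Ordinal.{0}, ν = Ordinal.omega0 ^ (δ + 1) then
    cnfCoeff (lambdaOf α g) h.choose
  else 0

/-- A composition on `𝕃_{<α}` (axioms (CL1)–(CL5)); `C f g` is `f ∘ g`,
subject to conditions only when the right argument is `> ℝ`. -/
def IsCompositionOp (α : Ordinal.{0}) (C : LSeries α → LSeries α → LSeries α) : Prop :=
  -- (CL1): for each g > ℝ, `f ↦ f ∘ g` is an ℝ-algebra homomorphism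
  (∀ g, gtR g →
    C 1 g = 1 ∧
    (∀ f₁ f₂, C (f₁ + f₂) g = C f₁ g + C f₂ g) ∧
    (∀ f₁ f₂, C (f₁ * f₂) g = C f₁ g * C f₂ g) ∧
    (∀ c : ℝ, C (HahnSeries.C c) g = HahnSeries.C c)) ∧
  -- (CL2)
  (∀ f, C f (ell α 0) = f) ∧
  (∀ g, gtR g → C (ell α 0) g = g) ∧
  -- (CL3)
  (∀ f g, gtR g → SPos f → C (logFn α f) g = logFn α (C f g)) ∧
  -- (CL4)
  (∀ g, gtR g → ∀ {ι : Type 1} (F : ι → LSeries α), IsSummable F →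
    IsSummable (fun i => C (F i) g) ∧ C (famSum F) g = famSum fun i => C (F i) g) ∧
  -- (CL5)
  (∀ f g h, gtR g → gtR h → C (C f g) h = C f (C g h))

/-- A composition admits Taylor expansion if for `g > ℝ` and `h ≺ g` the family
`(f⁽ⁿ⁾∘g)·hⁿ/n!` is summable with sum `f∘(g+h)`. -/
def AdmitsTaylor (α : Ordinal.{0}) (D : LSeries α → LSeries α)
    (C : LSeries α → LSeries α → LSeries α) : Prop :=
  ∀ f g h, gtR g → prec h g →
    IsSummable (fun n : ℕ => ((n.factorial : ℝ))⁻¹ • (C (D^[n] f) g * h ^ n)) ∧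
    C f (g + h) = famSum fun n : ℕ => ((n.factorial : ℝ))⁻¹ • (C (D^[n] f) g * h ^ n)

/-- The hyperlogarithm identities for a composition on `𝕃_{<ω^λ}`. -/
def HyperlogIds (lam : Ordinal.{0})
    (C : LSeries (Ordinal.omega0 ^ lam) → LSeries (Ordinal.omega0 ^ lam) →
      LSeries (Ordinal.omega0 ^ lam)) : Prop :=
  (∀ β γ : Ordinal.{0}, β < lam → γ < Ordinal.omega0 ^ (β + 1) →
      C (ell (Ordinal.omega0 ^ lam) γ) (ell (Ordinal.omega0 ^ lam) (Ordinal.omega0 ^ β))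
        = ell (Ordinal.omega0 ^ lam) (Ordinal.omega0 ^ β + γ)) ∧
  (∀ β : Ordinal.{0}, β < lam →
      C (ell (Ordinal.omega0 ^ lam) (Ordinal.omega0 ^ (β + 1)))
          (ell (Ordinal.omega0 ^ lam) (Ordinal.omega0 ^ β))
        = ell (Ordinal.omega0 ^ lam) (Ordinal.omega0 ^ (β + 1)) - 1) ∧
  (∀ β γ : Ordinal.{0}, β < γ → γ < lam → Order.IsSuccLimit γ →
      (C (ell (Ordinal.omega0 ^ lam) (Ordinal.omega0 ^ γ))
          (ell (Ordinal.omega0 ^ lam) (Ordinal.omega0 ^ β))).coeff 0 = 0)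


end LogHyp

/-!
For a fixed monomial `g` only finitely many `ε i` matter. All supports involved lie in the
additive monoid `C` generated by the supports of the `ε i`, which is well-based because its
generators are infinitesimal; hence `g = a + c` with `a ∈ supp ε i` and `c ∈ C` holds only for
`i` in a finite set `J`. Products `∏_{i ∈ E} ε i` with `E ⊄ J`, and the logarithms
`log (1 + ε i)` with `i ∉ J`, do not contribute to the coefficient of `g`, and on the finite part
`exp (∑_{i ∈ J} log (1 + ε i)) = ∏_{i ∈ J} (1 + ε i) = ∑_{E ⊆ J} ∏_{i ∈ E} ε i`.
The finite identity rests on three facts about evaluating power series at infinitesimals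
(`PowerSeries.heval`): it is compatible with substitution, `exp (a + b) = exp a * exp b`, and the
formal identity `exp (log (1 + X)) = 1 + X`, proved by comparing derivatives.
-/

open PowerSeries HahnSeries SummableFamily
open scoped Pointwise

namespace PowerSeries

theorem coeff_pow_eq_zero_of_lt {R : Type*} [CommRing R] {f : R⟦X⟧} (hf : constantCoeff f = 0)
    {m n : ℕ} (h : m < n) : coeff m (f ^ n) = 0 :=
  X_pow_dvd_iff.1 (pow_dvd_pow_of_dvd (X_dvd_iff.2 hf) n) m h

theorem one_add_X_mul_derivative_log {A : Type*} [CommRing A] [Algebra ℚ A] :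
    (1 + X) * d⁄dX A (log A) = 1 := by
  ext (_ | n)
  · simp [deriv_log]
  · rw [add_mul, one_mul, map_add, coeff_succ_X_mul, deriv_log, coeff_one]
    simp [pow_succ]

variable {k : Type*} [Field k] [CharZero k]

theorem exp_subst_log : (exp k).subst (log k) = 1 + X := by
  set H : k⟦X⟧ := (exp k).subst (log k)
  have hunit : constantCoeff (1 + X : k⟦X⟧) ≠ 0 := by simp
  have hlog : d⁄dX k (log k) = (1 + X)⁻¹ :=
    (eq_inv_iff_mul_eq_one hunit).2 (by rw [mul_comm, one_add_X_mul_derivative_log])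
  have hH : d⁄dX k H = H * (1 + X)⁻¹ := by
    rw [derivative_subst HasSubst.log, derivative_exp, hlog]
  have hquot : H * (1 + X)⁻¹ = 1 := by
    refine derivative.ext ?_ ?_
    · rw [Derivation.leibniz, derivative_inv', hH]
      simp only [map_add, Derivation.map_one_eq_zero, derivative_X, zero_add, mul_one,
        smul_eq_mul, mul_neg]
      ring
    · rw [map_mul, PowerSeries.constantCoeff_inv, ← coeff_zero_eq_constantCoeff_apply,
        coeff_subst' HasSubst.log, finsum_eq_single _ 0]
      · simp
      · intro d hd
        simp [coeff_zero_eq_constantCoeff_apply, hd]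
  calc H = H * (1 + X)⁻¹ * (1 + X) := by
        rw [mul_assoc, PowerSeries.inv_mul_cancel _ hunit, mul_one]
    _ = 1 + X := by rw [hquot, one_mul]

theorem X_mul_mk_eq_log : X * mk (fun n => (-1 : k) ^ n / (n + 1)) = log k := by
  ext (_ | n)
  · simp
  · rw [coeff_succ_X_mul, coeff_mk, coeff_log]
    simp [pow_succ]

end PowerSeries

namespace HahnSeries

theorem zero_lt_orderTop_iff_forall {Γ R : Type*} [LinearOrder Γ] [Zero Γ] [Zero R]
    {x : HahnSeries Γ R} : 0 < x.orderTop ↔ ∀ g ∈ x.support, 0 < g := by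
  refine ⟨fun hx g hg => WithTop.coe_pos.1 (hx.trans_le (orderTop_le_of_coeff_ne_zero hg)),
    fun h => ?_⟩
  rcases eq_or_ne x 0 with rfl | hx
  · simp
  · rw [orderTop_of_ne_zero hx, WithTop.coe_pos]
    exact h _ (x.isWF_support.min_mem _)

section PartialOrder

variable {Γ R ι : Type*} [PartialOrder Γ]

theorem support_sum_subset [AddCommMonoid R] (t : Finset ι) (x : ι → HahnSeries Γ R) :
    (∑ i ∈ t, x i).support ⊆ ⋃ i ∈ t, (x i).support := fun g hg => by
  obtain ⟨i, hi, hne⟩ := Finset.exists_ne_zero_of_sum_ne_zero (by simpa using hg)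
  exact Set.mem_biUnion hi hne

namespace SummableFamily

theorem support_hsum_sub_sum_subset [AddCommGroup R] (s : SummableFamily Γ R ι)
    (J : Finset ι) : (s.hsum - ∑ i ∈ J, s i).support ⊆ ⋃ i ∉ J, (s i).support := by
  intro g hg
  by_contra h
  simp only [Set.mem_iUnion, not_exists] at h
  refine hg ?_
  rw [coeff_sub, coeff_hsum_eq_sum_of_subset (t := J) fun i hi => not_not.1 fun hiJ => h i hiJ hi,
    coeff_sum, sub_self]

def sumFibers [AddCommMonoid R] {β : Type*} (s : SummableFamily Γ R ι) (p : ι → β)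
    (hp : ∀ b, (p ⁻¹' {b}).Finite) : SummableFamily Γ R β where
  toFun b := ∑ i ∈ (hp b).toFinset, s i
  isPWO_iUnion_support' := s.isPWO_iUnion_support.mono <| Set.iUnion_subset fun b =>
    (support_sum_subset _ _).trans <|
      Set.iUnion₂_subset fun i _ => Set.subset_iUnion (fun i => (s i).support) i
  finite_co_support' g := ((s.finite_co_support g).image p).subset fun b hb => by
    obtain ⟨i, hi, hne⟩ := Finset.exists_ne_zero_of_sum_ne_zero (by simpa using hb)
    exact ⟨i, hne, by simpa using hi⟩

theorem hsum_sumFibers [AddCommMonoid R] {β : Type*} (s : SummableFamily Γ R ι) (p : ι → β)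
    (hp : ∀ b, (p ⁻¹' {b}).Finite) : (s.sumFibers p hp).hsum = s.hsum := by
  ext g
  obtain ⟨T, hT⟩ : ∃ T : Finset ι, ∀ i, i ∈ T ↔ (s i).coeff g ≠ 0 :=
    ⟨_, fun i => (s.finite_co_support g).mem_toFinset⟩
  rw [coeff_hsum_eq_sum_of_subset (t := T) fun i hi => (hT i).2 hi,
    ← Finset.sum_fiberwise_of_maps_to (t := T.image p) fun i hi => Finset.mem_image_of_mem p hi,
    coeff_hsum_eq_sum_of_subset (t := T.image p)]
  · refine Finset.sum_congr rfl fun b _ => ?_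
    rw [sumFibers, coe_mk, coeff_sum]
    refine (Finset.sum_subset (fun i hi => ?_) fun i hi hiT => ?_).symm
    · rw [Finset.mem_filter] at hi
      simp [hi.2]
    · rw [Set.Finite.mem_toFinset, Set.mem_preimage, Set.mem_singleton_iff] at hi
      exact not_not.1 fun hne => hiT (Finset.mem_filter.2 ⟨(hT i).2 hne, hi⟩)
  · intro b hb
    obtain ⟨i, hi, hne⟩ := Finset.exists_ne_zero_of_sum_ne_zero (by simpa [sumFibers] using hb)
    rw [Set.Finite.mem_toFinset, Set.mem_preimage, Set.mem_singleton_iff] at hi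
    exact Finset.mem_image.2 ⟨i, (hT i).2 hne, hi⟩

end SummableFamily

end PartialOrder

variable {Γ : Type*} [AddCommMonoid Γ] [LinearOrder Γ] [IsOrderedCancelAddMonoid Γ]

theorem pos_of_mem_add_closure {A : Set Γ} (hA : ∀ g ∈ A, 0 < g) {g : Γ}
    (hg : g ∈ A + AddSubmonoid.closure A) : 0 < g := by
  obtain ⟨a, ha, c, hc, rfl⟩ := hg
  exact add_pos_of_pos_of_nonneg (hA a ha)
    (AddSubmonoid.closure_induction (fun g hg => (hA g hg).le) le_rfl
      (fun _ _ _ _ => add_nonneg) hc)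

theorem support_mul_subset_add {R : Type*} [NonUnitalNonAssocSemiring R] {A : Set Γ}
    {C : AddSubmonoid Γ} {x y : HahnSeries Γ R} (hx : x.support ⊆ A + C)
    (hy : y.support ⊆ C) : (x * y).support ⊆ A + C := by
  intro g hg
  obtain ⟨a, ha, b, hb, rfl⟩ := support_mul_subset hg
  obtain ⟨u, hu, c, hc, rfl⟩ := hx ha
  exact ⟨u, hu, c + b, add_mem hc (hy hb), (add_assoc u c b).symm⟩

theorem support_prod_subset {R : Type*} [CommSemiring R] {ι : Type*} {C : AddSubmonoid Γ}
    (E : Finset ι) {x : ι → HahnSeries Γ R} (hx : ∀ i ∈ E, (x i).support ⊆ C) :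
    (∏ i ∈ E, x i).support ⊆ C := by
  induction E using Finset.induction_on with
  | empty =>
    rw [Finset.prod_empty, ← single_zero_one]
    exact support_single_subset.trans (by simp)
  | insert i E hi ih =>
    rw [Finset.prod_insert hi]
    intro g hg
    obtain ⟨a, ha, b, hb, rfl⟩ := support_mul_subset hg
    exact add_mem (hx i (by simp) ha) (ih (fun j hj => hx j (by simp [hj])) hb)

end HahnSeries

namespace PowerSeries

variable {Γ : Type*} [AddCommMonoid Γ] [LinearOrder Γ] [IsOrderedCancelAddMonoid Γ]

section CommRing

variable {R : Type*} [CommRing R] {x : HahnSeries Γ R}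

theorem support_heval_subset_closure (hx : 0 < x.orderTop) (f : R⟦X⟧) :
    (heval x f).support ⊆ AddSubmonoid.closure x.support := by
  intro g hg
  obtain ⟨_, ⟨n, rfl⟩, hn⟩ := support_hsum_subset hg
  simp only [powerSeriesFamily_of_orderTop_pos hx] at hn
  exact support_pow_subset_closure x n (HahnSeries.support_smul_subset _ _ hn)

theorem support_heval_subset_add (hx : 0 < x.orderTop) {A : Set Γ} {C : AddSubmonoid Γ}
    (hxA : x.support ⊆ A + C) (hAC : A ⊆ C) {f : R⟦X⟧} (hf : constantCoeff f = 0) :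
    (heval x f).support ⊆ A + C := by
  obtain ⟨f', rfl⟩ := X_dvd_iff.2 hf
  rw [map_mul, heval_X x hx]
  refine support_mul_subset_add hxA ((support_heval_subset_closure hx f').trans ?_)
  refine AddSubmonoid.closure_le.2 (hxA.trans ?_)
  rintro _ ⟨a, ha, c, hc, rfl⟩
  exact add_mem (hAC ha) hc

theorem orderTop_heval_pos (hx : 0 < x.orderTop) {f : R⟦X⟧} (hf : constantCoeff f = 0) :
    0 < (heval x f).orderTop := by
  have hsupp := support_heval_subset_add hx (Set.subset_add_left _ (zero_mem _))
    AddSubmonoid.subset_closure hf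
  exact zero_lt_orderTop_iff_forall.2 fun g hg =>
    pos_of_mem_add_closure (zero_lt_orderTop_iff_forall.1 hx) (hsupp hg)

theorem coeff_heval_eq_sum_range (hx : 0 < x.orderTop) {g : Γ} {N : ℕ}
    (hN : ∀ n, N < n → (x ^ n).coeff g = 0) (f : R⟦X⟧) :
    (heval x f).coeff g = ∑ n ∈ Finset.range (N + 1), coeff n f * (x ^ n).coeff g := by
  rw [heval_apply, coeff_hsum_eq_sum_of_subset (t := Finset.range (N + 1))]
  · simp [powerSeriesFamily_of_orderTop_pos hx]
  · intro n hn
    simp only [powerSeriesFamily_of_orderTop_pos hx, Set.mem_ofPred_eq,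
      HahnSeries.coeff_smul] at hn
    simpa using not_lt.1 (mt (hN n) (right_ne_zero_of_smul hn))

theorem exists_forall_coeff_pow_eq_zero (hx : 0 < x.orderTop) (g : Γ) :
    ∃ N, ∀ n, N < n → (x ^ n).coeff g = 0 := by
  obtain ⟨N, hN⟩ := (pow_finite_co_support hx g).bddAbove
  exact ⟨N, fun n hn => not_not.1 fun h => (hN h).not_gt hn⟩

theorem heval_subst (hx : 0 < x.orderTop) {f : R⟦X⟧} (hf : constantCoeff f = 0) (F : R⟦X⟧) :
    heval x (F.subst f) = heval (heval x f) F := by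
  ext g
  obtain ⟨N, hN⟩ := exists_forall_coeff_pow_eq_zero hx g
  have hpow (d : ℕ) : ((heval x f) ^ d).coeff g =
      ∑ n ∈ Finset.range (N + 1), coeff n (f ^ d) * (x ^ n).coeff g := by
    rw [← map_pow, coeff_heval_eq_sum_range hx hN]
  have hN' (d : ℕ) (hd : N < d) : ((heval x f) ^ d).coeff g = 0 := by
    rw [hpow]
    refine Finset.sum_eq_zero fun n hn => ?_
    rw [coeff_pow_eq_zero_of_lt hf (by rw [Finset.mem_range] at hn; omega), zero_mul]
  have hsubst (n : ℕ) (hn : n ∈ Finset.range (N + 1)) : coeff n (F.subst f) =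
      ∑ d ∈ Finset.range (N + 1), coeff d F * coeff n (f ^ d) := by
    rw [coeff_subst' (HasSubst.of_constantCoeff_zero' hf),
      finsum_eq_sum_of_support_subset (s := Finset.range (N + 1))]
    · simp
    · intro d hd
      rw [Finset.mem_range] at hn
      rw [Finset.coe_range, Set.mem_Iio]
      by_contra h
      exact hd (by simp [coeff_pow_eq_zero_of_lt hf (by omega : n < d)])
  rw [coeff_heval_eq_sum_range (orderTop_heval_pos hx hf) hN', coeff_heval_eq_sum_range hx hN]
  calc ∑ n ∈ Finset.range (N + 1), coeff n (F.subst f) * (x ^ n).coeff g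
      = ∑ n ∈ Finset.range (N + 1),
          (∑ d ∈ Finset.range (N + 1), coeff d F * coeff n (f ^ d)) * (x ^ n).coeff g :=
        Finset.sum_congr rfl fun n hn => by rw [hsubst n hn]
    _ = ∑ d ∈ Finset.range (N + 1), coeff d F * ((heval x f) ^ d).coeff g := by
        simp only [hpow, Finset.mul_sum, Finset.sum_mul, mul_assoc]
        exact Finset.sum_comm

end CommRing

variable {k : Type*} [Field k] [CharZero k]

theorem sum_antidiagonal_exp_smul_pow_mul_exp_smul_pow (a b : HahnSeries Γ k) (n : ℕ) :
    ∑ p ∈ Finset.HasAntidiagonal.antidiagonal n,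
      (coeff p.1 (exp k) • a ^ p.1) * (coeff p.2 (exp k) • b ^ p.2) =
      coeff n (exp k) • (a + b) ^ n := by
  have := congrArg (coeff n) (exp_mul_exp_eq_exp_add (A := HahnSeries Γ k) a b)
  simp only [PowerSeries.coeff_mul, coeff_rescale, coeff_exp, one_div, map_inv₀, map_natCast,
    Algebra.smul_def, IsScalarTower.algebraMap_apply ℚ k (HahnSeries Γ k)] at this ⊢
  convert this using 1
  · exact Finset.sum_congr rfl fun p _ => by ring
  · ring

theorem heval_exp_add {a b : HahnSeries Γ k} (ha : 0 < a.orderTop) (hb : 0 < b.orderTop) :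
    heval (a + b) (exp k) = heval a (exp k) * heval b (exp k) := by
  have hab : 0 < (a + b).orderTop := (lt_min ha hb).trans_le min_orderTop_le_orderTop_add
  have hp (n : ℕ) : ((fun p : ℕ × ℕ => p.1 + p.2) ⁻¹' {n}).Finite :=
    (Finset.HasAntidiagonal.antidiagonal n).finite_toSet.subset fun p hp => by simpa using hp
  rw [heval_apply, heval_apply, heval_apply, ← hsum_mul, ← hsum_sumFibers _ _ hp]
  congr 1
  ext1 n
  have hfiber : (hp n).toFinset = Finset.HasAntidiagonal.antidiagonal n := by ext; simp
  simp only [sumFibers, coe_mk, hfiber, mul_toFun, powerSeriesFamily_of_orderTop_pos ha,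
    powerSeriesFamily_of_orderTop_pos hb, powerSeriesFamily_of_orderTop_pos hab]
  exact (sum_antidiagonal_exp_smul_pow_mul_exp_smul_pow a b n).symm

theorem heval_exp_sum {ι : Type*} (J : Finset ι) {x : ι → HahnSeries Γ k}
    (hx : ∀ i ∈ J, 0 < (x i).orderTop) :
    heval (∑ i ∈ J, x i) (exp k) = ∏ i ∈ J, heval (x i) (exp k) := by
  induction J using Finset.induction_on with
  | empty => simp [powerSeriesFamily_hsum_zero]
  | insert i J hi ih =>
    have hJ : ∀ j ∈ J, 0 < (x j).orderTop := fun j hj => hx j (by simp [hj])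
    have hsum : 0 < (∑ j ∈ J, x j).orderTop := zero_lt_orderTop_iff_forall.2 fun g hg => by
      obtain ⟨j, hj, hg⟩ := Set.mem_iUnion₂.1 (support_sum_subset J x hg)
      exact zero_lt_orderTop_iff_forall.1 (hJ j hj) g hg
    rw [Finset.sum_insert hi, Finset.prod_insert hi, heval_exp_add (hx i (by simp)) hsum, ih hJ]

theorem heval_exp_heval_log {x : HahnSeries Γ k} (hx : 0 < x.orderTop) :
    heval (heval x (log k)) (exp k) = 1 + x := by
  rw [← heval_subst hx constantCoeff_log, exp_subst_log, map_add, map_one, heval_X x hx]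

end PowerSeries

namespace HahnSeries.SummableFamily

variable {Γ : Type*} [AddCommMonoid Γ] [LinearOrder Γ] {k : Type*} [Field k] {ι : Type*}
  (s : SummableFamily Γ k ι)

def supportClosure : AddSubmonoid Γ := AddSubmonoid.closure (⋃ i, (s i).support)

/-- Only the members `s i` with `i ∈ s.dividingIndices g` contribute to the coefficient of `g` in
products and logarithms of members of `s`. -/
def dividingIndices (g : Γ) : Set ι := {i | g ∈ (s i).support + s.supportClosure}

variable {s}

theorem support_subset_supportClosure (i : ι) : (s i).support ⊆ s.supportClosure :=
  (Set.subset_iUnion (fun i => (s i).support) i).trans AddSubmonoid.subset_closure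

theorem support_subset_add_supportClosure (i : ι) :
    (s i).support ⊆ (s i).support + s.supportClosure :=
  Set.subset_add_left _ (zero_mem _)

theorem support_one_add_subset (i : ι) : (1 + s i).support ⊆ s.supportClosure := by
  refine (support_add_subset _ _).trans (Set.union_subset ?_ (support_subset_supportClosure i))
  rw [← single_zero_one]
  exact support_single_subset.trans (by simp)

variable [IsOrderedCancelAddMonoid Γ]

theorem isPWO_supportClosure (hs : ∀ i, 0 < (s i).orderTop) :
    (s.supportClosure : Set Γ).IsPWO :=
  s.isPWO_iUnion_support.addSubmonoid_closure fun g hg => by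
    obtain ⟨i, hi⟩ := Set.mem_iUnion.1 hg
    exact (zero_lt_orderTop_iff_forall.1 (hs i) g hi).le

theorem orderTop_pos_of_support_subset (hs : ∀ i, 0 < (s i).orderTop) {x : HahnSeries Γ k}
    (hx : x.support ⊆ (⋃ i, (s i).support) + s.supportClosure) : 0 < x.orderTop :=
  zero_lt_orderTop_iff_forall.2 fun g hg => pos_of_mem_add_closure (fun g hg => by
    obtain ⟨i, hi⟩ := Set.mem_iUnion.1 hg
    exact zero_lt_orderTop_iff_forall.1 (hs i) g hi) (hx hg)

theorem finite_dividingIndices (hs : ∀ i, 0 < (s i).orderTop) (g : Γ) :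
    (s.dividingIndices g).Finite := by
  have hC := isPWO_supportClosure hs
  refine (((Finset.antidiagonal hC hC g).image Prod.fst).finite_toSet.biUnion
    fun a _ => s.finite_co_support a).subset ?_
  rintro i ⟨a, ha, c, hc, rfl⟩
  refine Set.mem_biUnion (x := a) ?_ ha
  exact Finset.mem_image.2
    ⟨(a, c), Finset.mem_antidiagonal.2 ⟨support_subset_supportClosure i ha, hc, rfl⟩, rfl⟩

theorem support_prod_subset_add {E : Finset ι} {i : ι} (hi : i ∈ E) :
    (∏ j ∈ E, s j).support ⊆ (s i).support + s.supportClosure := by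
  rw [← Finset.mul_prod_erase E s hi]
  exact support_mul_subset_add (support_subset_add_supportClosure i)
    (support_prod_subset _ fun j _ => support_subset_supportClosure j)

variable (s) in
def prodFamily (hs : ∀ i, 0 < (s i).orderTop) : SummableFamily Γ k (Finset ι) where
  toFun E := ∏ i ∈ E, s i
  isPWO_iUnion_support' := (isPWO_supportClosure hs).mono <| Set.iUnion_subset fun E =>
    support_prod_subset E fun i _ => support_subset_supportClosure i
  finite_co_support' g := ((finite_dividingIndices hs g).toFinset.powerset.finite_toSet).subset
    fun _ hE => Finset.mem_coe.2 <| Finset.mem_powerset.2 fun _ hi =>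
      (Set.Finite.mem_toFinset _).2 (support_prod_subset_add hi hE)

theorem coeff_hsum_prodFamily (hs : ∀ i, 0 < (s i).orderTop) {g : Γ} {J : Finset ι}
    (hJ : s.dividingIndices g ⊆ J) :
    (prodFamily s hs).hsum.coeff g = (∏ i ∈ J, (1 + s i)).coeff g := by
  rw [Finset.prod_one_add, coeff_sum, coeff_hsum_eq_sum_of_subset]
  · rfl
  · exact fun E hE => Finset.mem_coe.2 <| Finset.mem_powerset.2 fun _ hi =>
      hJ (support_prod_subset_add hi hE)

variable [CharZero k]

theorem support_heval_log_subset (hs : ∀ i, 0 < (s i).orderTop) (i : ι) :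
    (heval (s i) (log k)).support ⊆ (s i).support + s.supportClosure :=
  support_heval_subset_add (hs i) (support_subset_add_supportClosure i)
    (support_subset_supportClosure i) constantCoeff_log

variable (s) in
def logFamily (hs : ∀ i, 0 < (s i).orderTop) : SummableFamily Γ k ι where
  toFun i := heval (s i) (log k)
  isPWO_iUnion_support' := (isPWO_supportClosure hs).mono <| Set.iUnion_subset fun i =>
    (support_heval_log_subset hs i).trans <| by
      rintro _ ⟨a, ha, c, hc, rfl⟩
      exact add_mem (support_subset_supportClosure i ha) hc
  finite_co_support' g := (finite_dividingIndices hs g).subset fun i hi =>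
    support_heval_log_subset hs i hi

theorem support_logFamily_subset (hs : ∀ i, 0 < (s i).orderTop) (i : ι) :
    (logFamily s hs i).support ⊆ (⋃ i, (s i).support) + s.supportClosure :=
  (support_heval_log_subset hs i).trans
    (Set.add_subset_add_right (Set.subset_iUnion (fun i => (s i).support) i))

theorem orderTop_hsum_logFamily_pos (hs : ∀ i, 0 < (s i).orderTop) :
    0 < (logFamily s hs).hsum.orderTop :=
  orderTop_pos_of_support_subset hs <| support_hsum_subset.trans <|
    Set.iUnion_subset (support_logFamily_subset hs)

theorem coeff_heval_hsum_logFamily_exp (hs : ∀ i, 0 < (s i).orderTop) {g : Γ} {J : Finset ι}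
    (hJ : s.dividingIndices g ⊆ J) :
    (heval (logFamily s hs).hsum (exp k)).coeff g = (∏ i ∈ J, (1 + s i)).coeff g := by
  set L := logFamily s hs
  set R := L.hsum - ∑ i ∈ J, L i
  set A := ⋃ i ∉ J, (s i).support
  have hR : R.support ⊆ A + s.supportClosure := by
    rw [Set.iUnion₂_add]
    exact (support_hsum_sub_sum_subset L J).trans
      (Set.iUnion₂_mono fun i _ => support_heval_log_subset hs i)
  have hRpos : 0 < R.orderTop := orderTop_pos_of_support_subset hs <| hR.trans <|
    Set.add_subset_add_right <| Set.iUnion₂_subset fun i _ =>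
      Set.subset_iUnion (fun i => (s i).support) i
  have hLpos (i : ι) : 0 < (L i).orderTop :=
    orderTop_pos_of_support_subset hs (support_logFamily_subset hs i)
  have hJpos : 0 < (∑ i ∈ J, L i).orderTop := orderTop_pos_of_support_subset hs fun g hg => by
    obtain ⟨i, -, hg⟩ := Set.mem_iUnion₂.1 (support_sum_subset J L hg)
    exact support_logFamily_subset hs i hg
  have htail : (heval R (exp k - 1) * ∏ i ∈ J, (1 + s i)).coeff g = 0 := by
    refine not_not.1 fun hg => ?_
    have hsupp := support_mul_subset_add
      (support_heval_subset_add hRpos hR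
        (Set.iUnion₂_subset fun i _ => support_subset_supportClosure i)
        (by simp [constantCoeff_exp]))
      (support_prod_subset J fun i _ => support_one_add_subset i) hg
    rw [Set.iUnion₂_add] at hsupp
    obtain ⟨i, hiJ, hi⟩ := Set.mem_iUnion₂.1 hsupp
    exact hiJ (hJ hi)
  have hexp : heval R (exp k) = 1 + heval R (exp k - 1) := by
    rw [map_sub, map_one, add_sub_cancel]
  have hprod : ∏ i ∈ J, heval (L i) (exp k) = ∏ i ∈ J, (1 + s i) :=
    Finset.prod_congr rfl fun i _ => heval_exp_heval_log (hs i)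
  rw [← add_sub_cancel (∑ i ∈ J, L i) L.hsum, heval_exp_add hJpos hRpos,
    heval_exp_sum J fun i _ => hLpos i, hprod, hexp, mul_add, mul_one, coeff_add, mul_comm,
    htail, add_zero]

theorem heval_hsum_logFamily_exp (hs : ∀ i, 0 < (s i).orderTop) :
    heval (logFamily s hs).hsum (exp k) = (prodFamily s hs).hsum := by
  ext g
  have hJ := (finite_dividingIndices hs g).coe_toFinset.symm.subset
  rw [coeff_heval_hsum_logFamily_exp hs hJ, coeff_hsum_prodFamily hs hJ]

end HahnSeries.SummableFamily

namespace LogHyp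

section Bridge

variable {M : Type*} [LinearOrder M] {R : Type*} [AddCommMonoid R] {ι : Type*}

theorem wellBased_of_isPWO {S : Set Mᵒᵈ} (h : S.IsPWO) :
    WellBased (OrderDual.toDual ⁻¹' S) := by
  rw [Set.isPWO_iff_isWF, Set.isWF_iff_no_descending_seq] at h
  rintro ⟨f, hf, hmem⟩
  exact h (fun n => OrderDual.toDual (f n)) (fun a b hab => hf hab) hmem

theorem isSummable_coe (s : SummableFamily Mᵒᵈ R ι) : IsSummable ⇑s :=
  ⟨wellBased_of_isPWO s.isPWO_iUnion_support, s.finite_co_support'⟩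

theorem famSum_coe (s : SummableFamily Mᵒᵈ R ι) : famSum ⇑s = s.hsum := by
  rw [famSum, dif_pos (isSummable_coe s)]
  rfl

end Bridge

theorem orderTop_pos_of_prec_one {M : Type*} [AddCommGroup M] [LinearOrder M] {k : Type*}
    [Field k] {f : HahnSeries Mᵒᵈ k} (hf : prec f 1) : 0 < f.orderTop := by
  refine zero_lt_orderTop_iff_forall.2 fun m hm => ?_
  obtain ⟨n, hn, hlt⟩ := hf.2 m hm
  rw [support_one, Set.mem_singleton_iff] at hn
  subst hn
  exact hlt

section ExpLog

variable {M : Type*} [AddCommGroup M] [LinearOrder M] [IsOrderedAddMonoid M]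
  {k : Type*} [Field k] [CharZero k] {f : HahnSeries Mᵒᵈ k}

theorem expS_eq_heval (hf : 0 < f.orderTop) : expS f = heval f (exp k) := by
  rw [expS, heval_apply, ← famSum_coe]
  congr 1
  ext1 n
  simp [powerSeriesFamily_of_orderTop_pos hf]

theorem log1p_eq_heval (hf : 0 < f.orderTop) : log1p f = heval f (log k) := by
  have hfam : (fun n : ℕ => ((-1 : k) ^ n / ((n : k) + 1)) • f ^ (n + 1)) =
      ⇑(f • powerSeriesFamily f (mk fun n => (-1 : k) ^ n / (n + 1))) := by
    ext1 n
    rw [SummableFamily.smul_apply, of_symm_smul_of_eq_mul, powerSeriesFamily_of_orderTop_pos hf,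
      coeff_mk, ← C_mul_eq_smul, ← C_mul_eq_smul, pow_succ', mul_left_comm]
  rw [log1p, hfam, famSum_coe, hsum_smul, ← heval_apply, ← X_mul_mk_eq_log, map_mul,
    heval_X f hf]

end ExpLog

/-- For a summable family `(ε_i)` in `k[[𝔐]]^{≺1}` (`k` of
characteristic 0), the family `(∏_{i∈E} ε_i)_E` over finite `E ⊆ I` is summable, and
`exp(∑_i log(1+ε_i)) = ∑_E ∏_{i∈E} ε_i`. -/
theorem statement12 {k : Type} [Field k] [CharZero k] {M : Type}
    [AddCommGroup M] [LinearOrder M] [IsOrderedAddMonoid M] {ι : Type}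
    (ε : ι → HahnSeries Mᵒᵈ k) (hε : ∀ i, prec (ε i) 1) (hsum : IsSummable ε) :
    IsSummable (fun E : Finset ι => ∏ i ∈ E, ε i) ∧
    expS (famSum fun i => log1p (ε i)) = famSum fun E : Finset ι => ∏ i ∈ E, ε i := by
  have hpos (i : ι) : 0 < (ε i).orderTop := orderTop_pos_of_prec_one (hε i)
  let s : SummableFamily Mᵒᵈ k ι := ⟨ε, wellBased_isPWO hsum.1, hsum.2⟩
  have hlog : (fun i => log1p (ε i)) = ⇑(logFamily s hpos) :=
    funext fun i => log1p_eq_heval (hpos i)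
  refine ⟨isSummable_coe (prodFamily s hpos), ?_⟩
  rw [hlog, famSum_coe, expS_eq_heval (orderTop_hsum_logFamily_pos hpos),
    heval_hsum_logFamily_exp, ← famSum_coe]
  rfl

end LogHyp
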